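/- Let n ≥ 1 and let P ⊆ ℝ^n be a full-dimensional lattice polytope. Suppose k is an integer with 0 ≤ k ≤ n − 1 such that the dilate kP contains no lattice point in its interior. Then for every integer ℓ ≥ n − k and every integer j ≥ 0, one has (ℓP ∩ ℤ^n) + (jP ∩ ℤ^n) = ((ℓ + j)P ∩ ℤ^n); that is, every lattice point of (ℓ+j)P is the sum of a lattice point of ℓP and a lattice point of jP. (The combinatorial translation of the surjectivity H⁰(X, A^{m+1}) ⊗ H⁰(X, A^{j}) → H⁰(X, A^{m+1+j}) obtained from Mumford's theorem applied to the (n−1−d(P))-autoregular ample line bundle A, as in the Remark following the proof of Theorem 1.2.) -/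

import Mathlib

/-!
Write `P = conv S`. If `m + k ≥ n`, every lattice point `x` of `(m + 1) P` is a vertex `u ∈ S` plus
a lattice point of `m P`; the theorem follows by induction on `j`.

By Carathéodory, `x = ∑ cᵢ zᵢ` with `t` affinely independent `zᵢ ∈ S`, all `cᵢ > 0` and
`∑ cᵢ = m + 1`. If some `cᵢ ≥ 1`, take `u = zᵢ`. Otherwise `∑ (1 - cᵢ) zᵢ = ∑ zᵢ - x` is a lattice
point, a combination with positive weights of total `t - m - 1`. Adding at most `n + 1 - t` further
points of `S` makes the family affinely spanning, and a positive combination of a spanning family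
lies in the interior of the corresponding dilate of its hull. The total weight is now at most
`n - m ≤ k`; padding with copies of one vertex gives a lattice point in the interior of `k P`.
-/

open Pointwise

def latticePts (n : ℕ) : Set (Fin n → ℝ) := {x | ∀ i, ∃ z : ℤ, x i = (z : ℝ)}

open Module Set

universe u

section Affine

variable {k E : Type*} [DivisionRing k] [AddCommGroup E] [Module k E] [FiniteDimensional k E]

theorem exists_finset_subset_card_le_affineSpan_union_eq_top {s : Set E}
    (hs : affineSpan k s = ⊤) (q : ℕ) {A : Set E} (hA : A.Nonempty)
    (hq : finrank k E ≤ finrank k (vectorSpan k A) + q) :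
    ∃ V : Finset E, ↑V ⊆ s ∧ V.card ≤ q ∧ affineSpan k (A ∪ V) = ⊤ := by
  classical
  induction q generalizing A with
  | zero =>
    refine ⟨∅, by simp, le_rfl, ?_⟩
    rw [Finset.coe_empty, union_empty,
      AffineSubspace.affineSpan_eq_top_iff_vectorSpan_eq_top_of_nonempty k E E hA]
    exact Submodule.eq_top_of_finrank_eq (le_antisymm (Submodule.finrank_le _) hq)
  | succ q ih =>
    by_cases htop : affineSpan k A = ⊤
    · exact ⟨∅, by simp, by simp, by rwa [Finset.coe_empty, union_empty]⟩
    obtain ⟨p, hps, hpA⟩ : ∃ p ∈ s, p ∉ affineSpan k A := by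
      by_contra! h
      exact htop (top_le_iff.mp (hs ▸ affineSpan_le.mpr h))
    have hlt : affineSpan k A < affineSpan k (insert p A) :=
      (affineSpan_mono k (subset_insert p A)).lt_of_ne fun h =>
        hpA (h ▸ subset_affineSpan k _ (mem_insert p A))
    have hrank : finrank k (vectorSpan k A) < finrank k (vectorSpan k (insert p A)) := by
      rw [← direction_affineSpan, ← direction_affineSpan]
      exact Submodule.finrank_lt_finrank_of_lt
        (AffineSubspace.direction_lt_of_nonempty hlt ((affineSpan_nonempty k).mpr hA))
    obtain ⟨V, hVs, hVq, hV⟩ := ih (insert_nonempty p A) (by omega)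
    refine ⟨insert p V, ?_, (Finset.card_insert_le p V).trans (by omega), ?_⟩
    · rw [Finset.coe_insert]
      exact insert_subset hps hVs
    · rwa [Finset.coe_insert, union_insert, ← insert_union]

end Affine

section Convex

variable {E : Type u} [AddCommGroup E] [Module ℝ E] {ι : Type*} [Fintype ι]

theorem sum_smul_mem_smul_convexHull [Nonempty ι] {s : Set E} {z : ι → E} (hz : ∀ i, z i ∈ s)
    {c : ι → ℝ} (hc : ∀ i, 0 ≤ c i) : ∑ i, c i • z i ∈ (∑ i, c i) • convexHull ℝ s := by
  rcases (Finset.sum_nonneg fun i _ => hc i).eq_or_lt with hzero | hpos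
  · have hc0 : ∀ i, c i = 0 := fun i =>
      (Finset.sum_eq_zero_iff_of_nonneg fun i _ => hc i).mp hzero.symm i (Finset.mem_univ i)
    rw [← hzero, zero_smul_set ⟨_, subset_convexHull ℝ s (hz (Classical.arbitrary ι))⟩]
    simp [hc0]
  · refine ⟨Finset.univ.centerMass c z, ?_, ?_⟩
    · exact Finset.univ.centerMass_mem_convexHull (fun i _ => hc i) hpos fun i _ => hz i
    · exact smul_inv_smul₀ hpos.ne' _

theorem exists_nonneg_sum_smul_eq_of_mem_convexHull_range {F : ι → E} {x : E}
    (hx : x ∈ convexHull ℝ (range F)) :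
    ∃ u : ι → ℝ, (∀ i, 0 ≤ u i) ∧ ∑ i, u i = 1 ∧ ∑ i, u i • F i = x := by
  classical
  rw [convexHull_range_eq_exists_affineCombination] at hx
  obtain ⟨t, w, hw0, hw1, rfl⟩ := hx
  refine ⟨fun i => if i ∈ t then w i else 0, fun i => ?_, ?_, ?_⟩
  · dsimp only
    split_ifs with hi
    exacts [hw0 i hi, le_rfl]
  · rwa [Finset.sum_ite_mem, Finset.univ_inter]
  · simp only [ite_smul, zero_smul]
    rw [Finset.sum_ite_mem, Finset.univ_inter,
      Finset.affineCombination_eq_linear_combination t F w hw1]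

theorem exists_pos_sum_smul_eq_of_mem_smul_convexHull {s : Set E} {r : ℝ} (hr : 0 < r) {x : E}
    (hx : x ∈ r • convexHull ℝ s) :
    ∃ (κ : Type u) (_ : Fintype κ) (z : κ → E) (c : κ → ℝ), range z ⊆ s ∧
      AffineIndependent ℝ z ∧ (∀ i, 0 < c i) ∧ ∑ i, c i = r ∧ ∑ i, c i • z i = x := by
  obtain ⟨p, hp, rfl⟩ := hx
  obtain ⟨κ, _, z, w, hzs, hz, hw, hw1, rfl⟩ := eq_pos_convex_span_of_mem_convexHull hp
  refine ⟨κ, inferInstance, z, fun i => r * w i, hzs, hz, fun i => mul_pos hr (hw i), ?_, ?_⟩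
  · rw [← Finset.mul_sum, hw1, mul_one]
  · simp only [mul_smul, Finset.smul_sum]

end Convex

section Topology

variable {E : Type*} [AddCommGroup E] [Module ℝ E] [TopologicalSpace E] [IsTopologicalAddGroup E]

theorem add_smul_mem_interior_smul_convexHull {S : Set E} {u : E} (hu : u ∈ S) {r k : ℕ}
    (hrk : r ≤ k) {y : E} (hy : y ∈ interior ((r : ℝ) • convexHull ℝ S)) :
    y + ((k - r : ℕ) : ℝ) • u ∈ interior ((k : ℝ) • convexHull ℝ S) := by
  have hk : (k : ℝ) = r + (k - r : ℕ) := by rw [← Nat.cast_add, Nat.add_sub_cancel' hrk]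
  rw [hk, (convex_convexHull ℝ S).add_smul (Nat.cast_nonneg _) (Nat.cast_nonneg _)]
  exact subset_interior_add_left (add_mem_add hy (smul_mem_smul_set (subset_convexHull ℝ S hu)))

end Topology

section Normed

variable {E : Type*} [NormedAddCommGroup E] [NormedSpace ℝ E] [FiniteDimensional ℝ E]
  {ι : Type*} [Fintype ι] {F : ι → E}

theorem sum_smul_mem_interior_convexHull (hF : affineSpan ℝ (range F) = ⊤) {w : ι → ℝ}
    (hw : ∀ i, 0 < w i) (hw1 : ∑ i, w i = 1) :
    ∑ i, w i • F i ∈ interior (convexHull ℝ (range F)) := by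
  obtain ⟨c, hc⟩ := interior_convexHull_nonempty_iff_affineSpan_eq_top.mpr hF
  obtain ⟨u, hu0, hu1, rfl⟩ :=
    exists_nonneg_sum_smul_eq_of_mem_convexHull_range (interior_subset hc)
  have hne : (Finset.univ : Finset ι).Nonempty :=
    Finset.nonempty_of_sum_ne_zero (hw1 ▸ one_ne_zero)
  set δ := Finset.univ.inf' hne w
  have hδ : 0 < δ := (Finset.lt_inf'_iff hne).mpr fun i _ => hw i
  have hδw : ∀ i, δ ≤ w i := fun i => Finset.inf'_le w (Finset.mem_univ i)
  have hu_le : ∀ i, u i ≤ 1 := fun i =>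
    hu1 ▸ Finset.single_le_sum (fun j _ => hu0 j) (Finset.mem_univ i)
  -- Since every `w i > 0`, moving `∑ w • F` a little away from the interior point `∑ u • F`
  -- stays in the hull; `∑ w • F` then lies on the open segment between the two.
  have hy : ∑ i, ((1 + δ) * w i - δ * u i) • F i ∈ convexHull ℝ (range F) := by
    refine mem_convexHull_of_exists_fintype _ F (fun i => ?_) ?_ (mem_range_self ·) rfl
    · nlinarith [hδw i, hu_le i]
    · rw [Finset.sum_sub_distrib, ← Finset.mul_sum, ← Finset.mul_sum, hw1, hu1]
      ring
  have hcombo : ∑ i, w i • F i = (1 + δ)⁻¹ • ∑ i, ((1 + δ) * w i - δ * u i) • F i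
      + (δ / (1 + δ)) • ∑ i, u i • F i := by
    simp only [Finset.smul_sum, smul_smul, ← Finset.sum_add_distrib, ← add_smul]
    refine Finset.sum_congr rfl fun i _ => congrArg (· • F i) ?_
    field_simp
    ring
  rw [hcombo]
  exact (convex_convexHull ℝ _).combo_self_interior_mem_interior hy hc (by positivity)
    (by positivity) (by field_simp)

theorem sum_smul_mem_interior_smul_convexHull (hF : affineSpan ℝ (range F) = ⊤) {c : ι → ℝ}
    (hc : ∀ i, 0 < c i) : ∑ i, c i • F i ∈ interior ((∑ i, c i) • convexHull ℝ (range F)) := by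
  have : Nonempty ι := range_nonempty_iff_nonempty.mp
    (AffineSubspace.nonempty_of_affineSpan_eq_top ℝ E E hF)
  have hr : 0 < ∑ i, c i := Finset.sum_pos (fun i _ => hc i) Finset.univ_nonempty
  rw [interior_smul₀ hr.ne']
  refine ⟨∑ i, (c i / ∑ j, c j) • F i, sum_smul_mem_interior_convexHull hF
    (fun i => div_pos (hc i) hr) (by rw [← Finset.sum_div, div_self hr.ne']), ?_⟩
  simp only [Finset.smul_sum, smul_smul, mul_div_cancel₀ _ hr.ne']

theorem exists_one_le_of_sum_smul_mem {L : AddSubgroup E} {S : Set E} (hSL : S ⊆ L)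
    (hS : affineSpan ℝ S = ⊤) {k m : ℕ} (hk : ∀ x ∈ interior ((k : ℝ) • convexHull ℝ S), x ∉ L)
    (hmk : finrank ℝ E ≤ m + k) {z : ι → E} (hzS : range z ⊆ S) (hz : AffineIndependent ℝ z)
    {c : ι → ℝ} (hcsum : ∑ i, c i = m + 1) (hxL : ∑ i, c i • z i ∈ L) :
    ∃ i, 1 ≤ c i := by
  classical
  by_contra! hlt
  have : Nonempty ι := Finset.univ_nonempty_iff.mp
    (Finset.nonempty_of_sum_ne_zero (by rw [hcsum]; positivity))
  let i₀ := Classical.arbitrary ι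
  have hcard : m + 1 ≤ Fintype.card ι := by
    have : (m + 1 : ℝ) ≤ Fintype.card ι := by
      rw [← hcsum, ← Finset.card_univ, ← nsmul_one, ← Finset.sum_const]
      exact Finset.sum_le_sum fun i _ => (hlt i).le
    exact_mod_cast this
  have hrank := hz.finrank_vectorSpan_add_one
  obtain ⟨V, hVS, hVcard, hV⟩ := exists_finset_subset_card_le_affineSpan_union_eq_top hS
    (finrank ℝ E - finrank ℝ (vectorSpan ℝ (range z))) (range_nonempty z) (by omega)
  let F : ι ⊕ V → E := Sum.elim z (↑)
  let a : ι ⊕ V → ℝ := Sum.elim (fun i => 1 - c i) 1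
  have hF : affineSpan ℝ (range F) = ⊤ := by
    rwa [Set.Sum.elim_range, Subtype.range_coe_subtype, Finset.setOfPred_mem]
  have ha : ∀ b, 0 < a b := by
    rintro (i | v)
    exacts [sub_pos.mpr (hlt i), one_pos]
  have hrk : Fintype.card ι - (m + 1) + V.card ≤ k := by
    have := Submodule.finrank_le (vectorSpan ℝ (range z))
    omega
  set r := Fintype.card ι - (m + 1) + V.card
  have hasum : ∑ b, a b = r := by
    simp [r, a, Fintype.sum_sum_type, Finset.sum_sub_distrib, hcsum, Nat.cast_sub hcard]
  have hyL : ∑ b, a b • F b ∈ L := by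
    have : ∑ b, a b • F b = (∑ i, z i - ∑ i, c i • z i) + ∑ v : V, (v : E) := by
      simp [a, F, Fintype.sum_sum_type, sub_smul, Finset.sum_sub_distrib]
    rw [this]
    exact L.add_mem (L.sub_mem (L.sum_mem fun i _ => hSL (hzS (mem_range_self i))) hxL)
      (L.sum_mem fun v _ => hSL (hVS v.2))
  refine hk _ (add_smul_mem_interior_smul_convexHull (hzS ⟨i₀, rfl⟩) hrk ?_) (L.add_mem hyL ?_)
  · rw [← hasum]
    refine interior_mono (smul_set_mono (convexHull_mono ?_))
      (sum_smul_mem_interior_smul_convexHull hF ha)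
    rintro _ ⟨i | v, rfl⟩
    exacts [hzS ⟨i, rfl⟩, hVS v.2]
  · rw [Nat.cast_smul_eq_nsmul]
    exact L.nsmul_mem (hSL (hzS ⟨i₀, rfl⟩)) _

theorem exists_mem_sub_mem_smul_convexHull {L : AddSubgroup E} {S : Set E} (hSL : S ⊆ L)
    (hS : affineSpan ℝ S = ⊤) {k m : ℕ} (hk : ∀ x ∈ interior ((k : ℝ) • convexHull ℝ S), x ∉ L)
    (hmk : finrank ℝ E ≤ m + k) {x : E} (hx : x ∈ ((m + 1 : ℕ) : ℝ) • convexHull ℝ S)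
    (hxL : x ∈ L) : ∃ u ∈ S, x - u ∈ (m : ℝ) • convexHull ℝ S := by
  classical
  obtain ⟨κ, _, z, c, hzS, hz, hc, hcsum, rfl⟩ :=
    exists_pos_sum_smul_eq_of_mem_smul_convexHull (by positivity) hx
  push_cast at hcsum
  obtain ⟨i₀, hi₀⟩ := exists_one_le_of_sum_smul_mem hSL hS hk hmk hzS hz hcsum hxL
  refine ⟨z i₀, hzS ⟨i₀, rfl⟩, ?_⟩
  have hc' : ∀ i, 0 ≤ c i - (Pi.single i₀ 1 : κ → ℝ) i := by
    intro i
    rcases eq_or_ne i i₀ with rfl | hi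
    · simpa using hi₀
    · simpa [hi] using (hc i).le
  have : Nonempty κ := ⟨i₀⟩
  have := sum_smul_mem_smul_convexHull (s := S) (fun i => hzS ⟨i, rfl⟩) hc'
  convert this using 2
  · simp [Finset.sum_sub_distrib, hcsum]
  · simp [sub_smul, Finset.sum_sub_distrib, Pi.single_apply]

end Normed

def latticeAddSubgroup (n : ℕ) : AddSubgroup (Fin n → ℝ) where
  carrier := latticePts n
  add_mem' {x y} hx hy i := by
    obtain ⟨a, ha⟩ := hx i
    obtain ⟨b, hb⟩ := hy i
    exact ⟨a + b, by simp [ha, hb]⟩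
  zero_mem' _ := ⟨0, by simp⟩
  neg_mem' {x} hx i := by
    obtain ⟨a, ha⟩ := hx i
    exact ⟨-a, by simp [ha]⟩

@[simp]
theorem coe_latticeAddSubgroup (n : ℕ) : (latticeAddSubgroup n : Set (Fin n → ℝ)) = latticePts n :=
  rfl

theorem smul_convexHull_inter_add_smul_convexHull_inter {E : Type*} [NormedAddCommGroup E]
    [NormedSpace ℝ E] [FiniteDimensional ℝ E] {L : AddSubgroup E} {S : Set E} (hSL : S ⊆ L)
    (hS : affineSpan ℝ S = ⊤) {k ℓ : ℕ}
    (hk : ∀ x ∈ interior ((k : ℝ) • convexHull ℝ S), x ∉ L) (hℓ : finrank ℝ E ≤ ℓ + k) (j : ℕ) :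
    ((ℓ : ℝ) • convexHull ℝ S ∩ L) + ((j : ℝ) • convexHull ℝ S ∩ L)
      = ((ℓ + j : ℕ) : ℝ) • convexHull ℝ S ∩ L := by
  apply Subset.antisymm
  · rintro _ ⟨a, ⟨ha, haL⟩, b, ⟨hb, hbL⟩, rfl⟩
    refine ⟨?_, L.add_mem haL hbL⟩
    rw [Nat.cast_add, (convex_convexHull ℝ S).add_smul (Nat.cast_nonneg ℓ) (Nat.cast_nonneg j)]
    exact add_mem_add ha hb
  induction j with
  | zero =>
    rintro x hx
    have hne : (convexHull ℝ S).Nonempty :=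
      convexHull_nonempty_iff.mpr (AffineSubspace.nonempty_of_affineSpan_eq_top ℝ E E hS)
    refine ⟨x, hx, 0, ⟨?_, L.zero_mem⟩, add_zero x⟩
    rw [Nat.cast_zero, zero_smul_set hne]
    rfl
  | succ j ih =>
    rintro x ⟨hx, hxL⟩
    rw [← add_assoc] at hx
    obtain ⟨u, huS, hxu⟩ := exists_mem_sub_mem_smul_convexHull hSL hS hk (by omega) hx hxL
    obtain ⟨a, ha, b, ⟨hb, hbL⟩, hab⟩ := ih ⟨by exact_mod_cast hxu, L.sub_mem hxL (hSL huS)⟩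
    have hbu : b + u ∈ ((j + 1 : ℕ) : ℝ) • convexHull ℝ S := by
      rw [Nat.cast_succ, (convex_convexHull ℝ S).add_smul (Nat.cast_nonneg j) zero_le_one,
        one_smul]
      exact add_mem_add hb (subset_convexHull ℝ S huS)
    exact ⟨a, ha, b + u, ⟨hbu, L.add_mem hbL (hSL huS)⟩,
      by simp only [← add_assoc, hab, sub_add_cancel]⟩

theorem lattice_points_add_general
    (n : ℕ)
    (S : Finset (Fin n → ℝ))
    (hSlat : (S : Set (Fin n → ℝ)) ⊆ latticePts n)
    (P : Set (Fin n → ℝ)) (hP : P = convexHull ℝ (S : Set (Fin n → ℝ)))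
    (hPfull : (interior P).Nonempty)
    (k : ℕ)
    (hk : ∀ x ∈ interior ((k : ℝ) • P), x ∉ latticePts n)
    (ℓ : ℕ) (hℓ : n - k ≤ ℓ) (j : ℕ) :
    (((ℓ : ℝ) • P) ∩ latticePts n) + (((j : ℝ) • P) ∩ latticePts n)
      = ((((ℓ + j : ℕ)) : ℝ) • P) ∩ latticePts n := by
  subst hP
  rw [← coe_latticeAddSubgroup] at hSlat hk ⊢
  exact smul_convexHull_inter_add_smul_convexHull_inter hSlat
    (interior_convexHull_nonempty_iff_affineSpan_eq_top.mp hPfull) hk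
    (by rw [finrank_fin_fun]; omega) j

/-- Let `P ⊆ ℝ^n` (`n ≥ 1`) be a full-dimensional lattice polytope and `0 ≤ k ≤ n - 1` an
integer such that `kP` contains no lattice point in its interior. Then for all integers
`ℓ ≥ n - k` and `j ≥ 0` one has `(ℓP ∩ ℤ^n) + (jP ∩ ℤ^n) = (ℓ+j)P ∩ ℤ^n`. -/
theorem lattice_points_add
    (n : ℕ) (hn : 1 ≤ n)
    (S : Finset (Fin n → ℝ)) (hS : S.Nonempty)
    (hSlat : (S : Set (Fin n → ℝ)) ⊆ latticePts n)
    (P : Set (Fin n → ℝ)) (hP : P = convexHull ℝ (S : Set (Fin n → ℝ)))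
    (hPfull : (interior P).Nonempty)
    (k : ℕ) (hkn : k ≤ n - 1)
    (hk : ∀ x ∈ interior ((k : ℝ) • P), x ∉ latticePts n)
    (ℓ : ℕ) (hℓ : n - k ≤ ℓ) (j : ℕ) :
    (((ℓ : ℝ) • P) ∩ latticePts n) + (((j : ℝ) • P) ∩ latticePts n)
      = ((((ℓ + j : ℕ)) : ℝ) • P) ∩ latticePts n :=
  lattice_points_add_general n S hSlat P hP hPfull k hk ℓ hℓ j
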